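/- Ehrling's lemma: Let X, Y, Z be normed spaces with a compact linear embedding X ↪ Y and a continuous injective linear embedding Y ↪ Z. Then for every ε > 0 there exists C(ε) > 0 such that ‖x‖_Y ≤ ε‖x‖_X + C(ε)‖x‖_Z for all x ∈ X. -/

import Mathlib

open Filter Topology

/-!
Argue by contradiction. If the estimate fails for some `ε` and every `C = n + 1`, its
homogeneity lets us normalise the witnesses to `xₙ` with `‖i xₙ‖ = 1`, `‖xₙ‖ < ε⁻¹`
and `‖j (i xₙ)‖ < 1 / (n + 1)`. Compactness of `i` gives a subsequence along which `i xₙ → y`;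
then `j y = 0`, so `y = 0` by injectivity of `j`, contradicting `‖y‖ = 1`.
-/

theorem IsCompactOperator.exists_subseq_tendsto_zero_of_tendsto_comp_zero
    {𝕜 X Y Z : Type*} [NontriviallyNormedField 𝕜]
    [SeminormedAddCommGroup X] [NormedSpace 𝕜 X] [NormedAddCommGroup Y] [NormedSpace 𝕜 Y]
    [TopologicalSpace Z] [AddCommMonoid Z] [Module 𝕜 Z] [T2Space Z]
    {i : X →L[𝕜] Y} {j : Y →L[𝕜] Z} (hi : IsCompactOperator i) (hj : Function.Injective j)
    {u : ℕ → X} (hu : Bornology.IsBounded (Set.range u))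
    (hju : Tendsto (fun n ↦ j (i (u n))) atTop (𝓝 0)) :
    ∃ φ : ℕ → ℕ, StrictMono φ ∧ Tendsto (fun n ↦ i (u (φ n))) atTop (𝓝 0) := by
  obtain ⟨K, hK, hiK⟩ := hi.image_subset_compact_of_bounded (f := (i : X →ₗ[𝕜] Y)) hu
  obtain ⟨y, -, φ, hφ, hy⟩ :=
    hK.tendsto_subseq fun n ↦ hiK ⟨u n, Set.mem_range_self n, rfl⟩
  have hjy : j y = 0 :=
    tendsto_nhds_unique ((j.continuous.tendsto y).comp hy) (hju.comp hφ.tendsto_atTop)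
  obtain rfl : y = 0 := hj (by rw [hjy, map_zero])
  exact ⟨φ, hφ, hy⟩

theorem LinearMap.exists_norm_eq_one_of_lt_norm
    {𝕜 X Y W : Type*} [RCLike 𝕜]
    [SeminormedAddCommGroup X] [NormedSpace 𝕜 X] [NormedAddCommGroup Y] [NormedSpace 𝕜 Y]
    [SeminormedAddCommGroup W] [NormedSpace 𝕜 W]
    (A : X →ₗ[𝕜] Y) (B : X →ₗ[𝕜] W) {a b : ℝ} (ha : 0 ≤ a) (hb : 0 ≤ b) {x : X}
    (hx : a * ‖x‖ + b * ‖B x‖ < ‖A x‖) :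
    ∃ u : X, ‖A u‖ = 1 ∧ a * ‖u‖ + b * ‖B u‖ < 1 := by
  have hAx : 0 < ‖A x‖ := lt_of_le_of_lt (by positivity) hx
  refine ⟨((‖A x‖⁻¹ : ℝ) : 𝕜) • x, ?_, ?_⟩
  · rw [map_smul, norm_smul, RCLike.norm_ofReal, abs_inv, abs_norm, inv_mul_cancel₀ hAx.ne']
  · simp only [map_smul, norm_smul, RCLike.norm_ofReal, abs_inv, abs_norm]
    calc a * (‖A x‖⁻¹ * ‖x‖) + b * (‖A x‖⁻¹ * ‖B x‖)
        = (a * ‖x‖ + b * ‖B x‖) / ‖A x‖ := by ring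
      _ < 1 := (div_lt_one hAx).2 hx

theorem stmt12_general {X Y Z : Type*}
    [NormedAddCommGroup X] [NormedSpace ℝ X]
    [NormedAddCommGroup Y] [NormedSpace ℝ Y]
    [NormedAddCommGroup Z] [NormedSpace ℝ Z]
    (i : X →L[ℝ] Y) (j : Y →L[ℝ] Z)
    (hi_compact : IsCompactOperator i)
    (hj_inj : Function.Injective j) :
    ∀ ε > 0, ∃ C > 0, ∀ x : X, ‖i x‖ ≤ ε * ‖x‖ + C * ‖j (i x)‖ := by
  intro ε hε
  by_contra! h
  have normalized (n : ℕ) : ∃ u, ‖i u‖ = 1 ∧ ε * ‖u‖ + (n + 1) * ‖j (i u)‖ < 1 := by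
    obtain ⟨x, hx⟩ := h (n + 1) n.cast_add_one_pos
    exact (i : X →ₗ[ℝ] Y).exists_norm_eq_one_of_lt_norm (j ∘L i : X →ₗ[ℝ] Z) hε.le
      n.cast_add_one_pos.le hx
  choose u hu_norm hu_lt using normalized
  have hu_bdd : Bornology.IsBounded (Set.range u) := by
    refine isBounded_iff_forall_norm_le.2 ⟨1 / ε, Set.forall_mem_range.2 fun n ↦ ?_⟩
    rw [le_div_iff₀' hε]
    linarith [hu_lt n, mul_nonneg n.cast_add_one_pos.le (norm_nonneg (j (i (u n))))]
  have hju : Tendsto (fun n ↦ j (i (u n))) atTop (𝓝 0) := by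
    refine squeeze_zero_norm (fun n ↦ ?_) tendsto_one_div_add_atTop_nhds_zero_nat
    rw [le_div_iff₀' n.cast_add_one_pos]
    linarith [hu_lt n, mul_nonneg hε.le (norm_nonneg (u n))]
  obtain ⟨φ, -, hφ⟩ :=
    hi_compact.exists_subseq_tendsto_zero_of_tendsto_comp_zero hj_inj hu_bdd hju
  have h_one : Tendsto (fun n ↦ ‖i (u (φ n))‖) atTop (𝓝 1) := by
    simp only [hu_norm, tendsto_const_nhds]
  exact one_ne_zero (tendsto_nhds_unique h_one (by simpa using hφ.norm))

/-- Ehrling's lemma. If `i : X → Y` is a compact (continuous linear, injective)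
embedding and `j : Y → Z` a continuous injective linear embedding, then for every `ε > 0`
there is `C(ε) > 0` with `‖i x‖ ≤ ε ‖x‖ + C(ε) ‖j (i x)‖` for all `x ∈ X`. -/
theorem stmt12 {X Y Z : Type*}
    [NormedAddCommGroup X] [NormedSpace ℝ X]
    [NormedAddCommGroup Y] [NormedSpace ℝ Y]
    [NormedAddCommGroup Z] [NormedSpace ℝ Z]
    (i : X →L[ℝ] Y) (j : Y →L[ℝ] Z)
    (hi_compact : IsCompactOperator i) (hi_inj : Function.Injective i)
    (hj_inj : Function.Injective j) :
    ∀ ε > 0, ∃ C > 0, ∀ x : X, ‖i x‖ ≤ ε * ‖x‖ + C * ‖j (i x)‖ :=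
  stmt12_general i j hi_compact hj_inj
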